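/- arXiv:1907.12468 — 9 statements merged into one kernel-verified Lean document; each statement's English description precedes it below -/
import Mathlib

section
/- Suppose (κ, w, y) is feasible for the master problem MP2. Then for every edge {v, u} ∈ E with κ(v) = 1 and κ(u) = 0, one has w_{vu} = 0. -/
open Finset

/-- Feasibility of the triple `(κ, w, y)` for the master problem MP2.
`κ v` indicates whether `v` is in the initial `(K+1)`-clique, `y v` whether `v` is a
double, and `w v u = 1` means that the neighbour `u` witnesses `v`. -/
structure MP2Feasible {V : Type*} [Fintype V] [DecidableEq V] (G : SimpleGraph V)
    [DecidableRel G.Adj] (K : ℕ) (κ y : V → ℤ) (w : V → V → ℤ) : Prop where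
  kappa01 : ∀ v, κ v = 0 ∨ κ v = 1
  y01 : ∀ v, y v = 0 ∨ y v = 1
  w01 : ∀ v u, G.Adj v u → w v u = 0 ∨ w v u = 1
  cliqueSize : ∑ v, κ v = (K : ℤ) + 1
  nonadjClique : ∀ v u, v ≠ u → ¬ G.Adj v u → κ v + κ u ≤ 1
  cliqueWitness : ∀ v u, G.Adj v u → κ v ≤ w u v
  linking : ∀ v, ∑ u ∈ G.neighborFinset v, w v u
      = ((K : ℤ) + 1) * (1 - κ v) - y v + (K : ℤ) * κ v

/-- The bijection `r : V → {0, …, n-1}` respects `(κ, w)`: vertices of the initial clique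
get ranks `≤ K`, and outside the initial clique a witness precedes the vertex it witnesses. -/
def Respects {V : Type*} [Fintype V] [DecidableEq V] (G : SimpleGraph V)
    [DecidableRel G.Adj] (K : ℕ) (κ : V → ℤ) (w : V → V → ℤ)
    (r : V ≃ Fin (Fintype.card V)) : Prop :=
  (∀ v, κ v = 1 → (r v : ℕ) ≤ K) ∧
  (∀ v u, G.Adj v u → κ v = 0 → κ u = 0 → w v u = 1 → (r u : ℕ) < (r v : ℕ))

/-- A directed cycle `c 0 → c 1 → ⋯ → c (m-1) → c 0` in the digraph on `V` whose arcs are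
the ordered pairs of adjacent vertices of `G`. -/
def IsDirectedCycle {V : Type*} (G : SimpleGraph V) (m : ℕ) (c : ℕ → V) : Prop :=
  2 ≤ m ∧ (∀ i j, i < m → j < m → c i = c j → i = j) ∧
  ∀ i < m, G.Adj (c i) (c ((i + 1) % m))

theorem mp2_no_witness_from_clique_to_outside {V : Type*} [Fintype V] [DecidableEq V]
    (G : SimpleGraph V) [DecidableRel G.Adj] (K : ℕ) (hK : 1 ≤ K)
    (hn : K + 1 ≤ Fintype.card V) (κ y : V → ℤ) (w : V → V → ℤ)
    (hfeas : MP2Feasible G K κ y w) :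
    ∀ v u, G.Adj v u → κ v = 1 → κ u = 0 → w v u = 0 := by
  intro v u hadj hκv hκu
  classical
  set N := G.neighborFinset v with hN
  set C := N.filter (fun x => κ x = 1) with hC
  -- C equals the clique minus v
  have hCeq : C = (Finset.univ.filter (fun x => κ x = 1)).erase v := by
    ext x
    simp only [hC, hN, Finset.mem_filter, Finset.mem_erase, SimpleGraph.mem_neighborFinset,
      Finset.mem_univ, true_and]
    constructor
    · rintro ⟨hx, hx1⟩
      exact ⟨fun h => G.irrefl (h ▸ hx), hx1⟩
    · rintro ⟨hne, hx1⟩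
      refine ⟨?_, hx1⟩
      by_contra hna
      have := hfeas.nonadjClique v x (Ne.symm hne) hna
      omega
  -- cardinality of the clique
  have hcard : (Finset.univ.filter (fun x => κ x = 1)).card = K + 1 := by
    have h1 : ∑ x, κ x = ∑ x ∈ Finset.univ.filter (fun x => κ x = 1), κ x := by
      rw [Finset.sum_filter_of_ne]
      intro x _ hx
      rcases hfeas.kappa01 x with h | h
      · exact absurd h hx
      · exact h
    have h2 : ∑ x ∈ Finset.univ.filter (fun x => κ x = 1), κ x
        = (Finset.univ.filter (fun x => κ x = 1)).card := by
      rw [Finset.sum_congr rfl (fun x hx => (Finset.mem_filter.mp hx).2)]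
      simp
    have := hfeas.cliqueSize
    rw [h1, h2] at this
    exact_mod_cast this
  have hvC : v ∈ Finset.univ.filter (fun x => κ x = 1) := by
    simp [hκv]
  have hCcard : C.card = K := by
    rw [hCeq, Finset.card_erase_of_mem hvC, hcard]; omega
  -- on C, w v x = 1
  have hwone : ∀ x ∈ C, w v x = 1 := by
    intro x hx
    simp only [hC, hN, Finset.mem_filter, SimpleGraph.mem_neighborFinset] at hx
    have h1 := hfeas.cliqueWitness x v hx.1.symm
    rcases hfeas.w01 v x hx.1 with h | h
    · omega
    · exact h
  have hsumC : ∑ x ∈ C, w v x = (K : ℤ) := by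
    rw [Finset.sum_congr rfl hwone]
    simp [hCcard]
  -- split the linking sum
  have hsplit : ∑ x ∈ C, w v x + ∑ x ∈ N.filter (fun x => ¬ κ x = 1), w v x
      = ∑ x ∈ N, w v x := Finset.sum_filter_add_sum_filter_not N _ _
  have hlink := hfeas.linking v
  rw [hκv] at hlink
  have hsumrest : ∑ x ∈ N.filter (fun x => ¬ κ x = 1), w v x = - y v := by
    have : ∑ x ∈ N, w v x = (K : ℤ) - y v := by rw [← hN] at hlink; rw [hlink]; ring
    omega
  have hyv : 0 ≤ y v := by rcases hfeas.y01 v with h | h <;> omega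
  have hnonneg : ∀ x ∈ N.filter (fun x => ¬ κ x = 1), 0 ≤ w v x := by
    intro x hx
    simp only [hN, Finset.mem_filter, SimpleGraph.mem_neighborFinset] at hx
    rcases hfeas.w01 v x hx.1 with h | h <;> omega
  have hsumzero : ∑ x ∈ N.filter (fun x => ¬ κ x = 1), w v x = 0 := by
    have hle : ∑ x ∈ N.filter (fun x => ¬ κ x = 1), w v x ≤ 0 := by omega
    have hge : 0 ≤ ∑ x ∈ N.filter (fun x => ¬ κ x = 1), w v x :=
      Finset.sum_nonneg hnonneg
    omega
  have huin : u ∈ N.filter (fun x => ¬ κ x = 1) := by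
    simp [hN, hadj, hκu]
  exact (Finset.sum_eq_zero_iff_of_nonneg hnonneg).mp hsumzero u huin
end

section
/- Suppose (κ, w, y) is feasible for the master problem MP2. Let C = (V^C, A^C) be any directed cycle in the digraph on V whose arcs are the ordered pairs (v,u) with {v,u} ∈ E, and suppose w_{vu} = 1 for every arc (v,u) ∈ A^C. Then either κ(v) = 1 for all v ∈ V^C, or κ(v) = 0 for all v ∈ V^C. -/
open Finset

theorem mp2_cycle_in_or_out_of_clique {V : Type*} [Fintype V] [DecidableEq V]
    (G : SimpleGraph V) [DecidableRel G.Adj] (K : ℕ) (hK : 1 ≤ K)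
    (hn : K + 1 ≤ Fintype.card V) (κ y : V → ℤ) (w : V → V → ℤ)
    (hfeas : MP2Feasible G K κ y w)
    (m : ℕ) (c : ℕ → V) (hcyc : IsDirectedCycle G m c)
    (hw : ∀ i < m, w (c i) (c ((i + 1) % m)) = 1) :
    (∀ i < m, κ (c i) = 1) ∨ (∀ i < m, κ (c i) = 0) := by
  obtain ⟨hm, hinj, hadj⟩ := hcyc
  classical
  by_cases h0 : ∀ i < m, κ (c i) = 0
  · exact Or.inr h0
  left
  push_neg at h0
  obtain ⟨i0, hi0, hκi0⟩ := h0
  have hκi0' : κ (c i0) = 1 := (hfeas.kappa01 (c i0)).resolve_left hκi0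
  -- The clique set
  set S : Finset V := Finset.univ.filter (fun x => κ x = 1) with hSdef
  have hmemS : ∀ x, x ∈ S ↔ κ x = 1 := by
    intro x; simp [hSdef]
  have hcardS : (S.card : ℤ) = (K : ℤ) + 1 := by
    have h1 : ∑ v, κ v = ∑ v, (if κ v = 1 then (1 : ℤ) else 0) := by
      apply Finset.sum_congr rfl
      intro v _
      rcases hfeas.kappa01 v with h | h <;> simp [h]
    rw [Finset.sum_boole] at h1
    rw [hSdef, ← h1, hfeas.cliqueSize]
  -- clique adjacency
  have hadjS : ∀ x z, κ x = 1 → κ z = 1 → x ≠ z → G.Adj x z := by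
    intro x z hx hz hne
    by_contra hna
    have := hfeas.nonadjClique x z hne hna
    omega
  -- key step lemma
  have key : ∀ v u, G.Adj v u → κ v = 1 → w v u = 1 → κ u = 1 := by
    intro v u hvu hκv hwvu
    by_contra hκu
    have hκu0 : κ u = 0 := (hfeas.kappa01 u).resolve_right hκu
    set T : Finset V := S.erase v with hTdef
    have hTsub : T ⊆ G.neighborFinset v := by
      intro x hx
      rw [Finset.mem_erase] at hx
      rw [SimpleGraph.mem_neighborFinset]
      exact (hadjS x v ((hmemS x).1 hx.2) hκv hx.1).symm
    have hvS : v ∈ S := (hmemS v).2 hκv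
    have hcardT : (T.card : ℤ) = (K : ℤ) := by
      have := Finset.card_erase_of_mem hvS
      rw [hTdef, this]
      have : 1 ≤ S.card := Finset.card_pos.2 ⟨v, hvS⟩
      push_cast [Nat.cast_sub this]
      omega
    have hsumT : (T.card : ℤ) ≤ ∑ x ∈ T, w v x := by
      calc (T.card : ℤ) = ∑ x ∈ T, 1 := by simp
        _ ≤ ∑ x ∈ T, w v x := by
            apply Finset.sum_le_sum
            intro x hx
            have hx' := hTsub hx
            rw [SimpleGraph.mem_neighborFinset] at hx'
            have hκx : κ x = 1 := (hmemS x).1 (Finset.mem_erase.1 hx).2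
            have := hfeas.cliqueWitness x v hx'.symm
            omega
    have huT : u ∉ T := by
      intro hu
      have : κ u = 1 := (hmemS u).1 (Finset.mem_erase.1 hu).2
      omega
    have hIsub : insert u T ⊆ G.neighborFinset v := by
      intro x hx
      rcases Finset.mem_insert.1 hx with h | h
      · subst h; rwa [SimpleGraph.mem_neighborFinset]
      · exact hTsub h
    have hbig : (K : ℤ) + 1 ≤ ∑ x ∈ insert u T, w v x := by
      rw [Finset.sum_insert huT, hwvu]
      omega
    have hmono : ∑ x ∈ insert u T, w v x ≤ ∑ x ∈ G.neighborFinset v, w v x := by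
      apply Finset.sum_le_sum_of_subset_of_nonneg hIsub
      intro x hx _
      rw [SimpleGraph.mem_neighborFinset] at hx
      rcases hfeas.w01 v x hx with h | h <;> omega
    have hlink := hfeas.linking v
    rw [hκv] at hlink
    rcases hfeas.y01 v with hy | hy <;> rw [hy] at hlink <;> omega
  -- step along the cycle
  have step : ∀ i < m, κ (c i) = 1 → κ (c ((i + 1) % m)) = 1 := by
    intro i hi hκ
    exact key (c i) (c ((i + 1) % m)) (hadj i hi) hκ (hw i hi)
  have prop : ∀ t, κ (c ((i0 + t) % m)) = 1 := by
    intro t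
    induction t with
    | zero => simpa [Nat.mod_eq_of_lt hi0] using hκi0'
    | succ t ih =>
        have hj : (i0 + t) % m < m := Nat.mod_lt _ (by omega)
        have := step _ hj ih
        rwa [Nat.mod_add_mod, show i0 + t + 1 = i0 + (t + 1) by ring] at this
  intro j hj
  have := prop (m + j - i0)
  rwa [show i0 + (m + j - i0) = m + j by omega, Nat.add_mod_left, Nat.mod_eq_of_lt hj] at this
end

section
/- Suppose (κ, w, y) is feasible for the master problem MP2 and there exists a bijection r : V → {0, 1, ..., n-1} respecting (κ, w). Then for every directed cycle C = (V^C, A^C) in the digraph on V whose arcs are the ordered pairs (v,u) with {v,u} ∈ E, and for every vertex ι ∈ V^C, the cycle-breaking inequality ∑_{(v,u)∈A^C} w_{vu} ≤ |V^C| − 1 + 𝟙(|V^C| ≤ K+1)·κ(ι) holds, where 𝟙(·) equals 1 if the enclosed condition is true and 0 otherwise. -/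
open Finset

lemma clique_card {V : Type*} [Fintype V] [DecidableEq V] {G : SimpleGraph V}
    [DecidableRel G.Adj] {K : ℕ} {κ y : V → ℤ} {w : V → V → ℤ}
    (hfeas : MP2Feasible G K κ y w) :
    (Finset.univ.filter (fun x => κ x = 1)).card = K + 1 := by
  have h1 : ∑ x ∈ Finset.univ.filter (fun x => κ x = 1), κ x = ∑ x, κ x :=
    Finset.sum_subset (Finset.subset_univ _) (fun x _ hx => by
      rcases hfeas.kappa01 x with h | h
      · exact h
      · exact absurd (Finset.mem_filter.mpr ⟨Finset.mem_univ x, h⟩) hx)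
  have h2 : ∑ x ∈ Finset.univ.filter (fun x => κ x = 1), κ x
      = ((Finset.univ.filter (fun x => κ x = 1)).card : ℤ) := by
    rw [Finset.sum_congr rfl (fun x hx => (Finset.mem_filter.mp hx).2)]
    simp
  have := hfeas.cliqueSize
  rw [← h1, h2] at this
  exact_mod_cast this

lemma witness_eq_kappa {V : Type*} [Fintype V] [DecidableEq V] {G : SimpleGraph V}
    [DecidableRel G.Adj] {K : ℕ} {κ y : V → ℤ} {w : V → V → ℤ}
    (hfeas : MP2Feasible G K κ y w) {v u : V} (hadj : G.Adj v u) (hv : κ v = 1) :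
    w v u = κ u := by
  set S : Finset V := Finset.univ.filter (fun x => κ x = 1) with hS
  have hScard : S.card = K + 1 := clique_card hfeas
  have hvS : v ∈ S := Finset.mem_filter.mpr ⟨Finset.mem_univ v, hv⟩
  have hsub : S \ {v} ⊆ G.neighborFinset v := by
    intro x hx
    rw [Finset.mem_sdiff, Finset.mem_singleton] at hx
    obtain ⟨hxS, hxv⟩ := hx
    have hx1 : κ x = 1 := (Finset.mem_filter.mp hxS).2
    rw [SimpleGraph.mem_neighborFinset]
    by_contra hnadj
    have := hfeas.nonadjClique v x (fun h => hxv h.symm) hnadj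
    rw [hv, hx1] at this; norm_num at this
  have hcardsd : (S \ {v}).card = K := by
    rw [Finset.card_sdiff_of_subset (Finset.singleton_subset_iff.mpr hvS), hScard]
    simp
  have hκnonneg : ∀ x, 0 ≤ κ x := fun x => by
    rcases hfeas.kappa01 x with h | h <;> rw [h] <;> norm_num
  have hsumκ : (K : ℤ) ≤ ∑ u ∈ G.neighborFinset v, κ u := by
    have h1 : ∑ x ∈ S \ {v}, κ x = (K : ℤ) := by
      rw [Finset.sum_congr rfl (fun x hx =>
        (Finset.mem_filter.mp (Finset.mem_sdiff.mp hx).1).2), Finset.sum_const, hcardsd]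
      simp
    calc (K : ℤ) = ∑ x ∈ S \ {v}, κ x := h1.symm
      _ ≤ ∑ u ∈ G.neighborFinset v, κ u :=
          Finset.sum_le_sum_of_subset_of_nonneg hsub (fun x _ _ => hκnonneg x)
  have hlink : ∑ u ∈ G.neighborFinset v, w v u = (K : ℤ) - y v := by
    rw [hfeas.linking v, hv]; ring
  have hterm : ∀ x ∈ G.neighborFinset v, κ x ≤ w v x := fun x hx =>
    hfeas.cliqueWitness x v ((SimpleGraph.mem_neighborFinset G v x).mp hx).symm
  have hsumle : ∑ u ∈ G.neighborFinset v, κ u ≤ ∑ u ∈ G.neighborFinset v, w v u :=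
    Finset.sum_le_sum hterm
  have hy : y v = 0 := by
    rcases hfeas.y01 v with h | h
    · exact h
    · exfalso; rw [hlink, h] at hsumle; linarith
  have hzero : ∑ u ∈ G.neighborFinset v, (w v u - κ u) = 0 := by
    rw [Finset.sum_sub_distrib, hlink, hy]
    have : ∑ u ∈ G.neighborFinset v, κ u = (K : ℤ) := le_antisymm (by
      rw [hy] at hlink; linarith [hsumle, hlink]) hsumκ
    rw [this]; ring
  have huN : u ∈ G.neighborFinset v := (SimpleGraph.mem_neighborFinset G v u).mpr hadj
  have := (Finset.sum_eq_zero_iff_of_nonneg (fun x hx => by linarith [hterm x hx])).mp hzero u huN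
  linarith


theorem cycle_breaking_inequality_valid {V : Type*} [Fintype V] [DecidableEq V]
    (G : SimpleGraph V) [DecidableRel G.Adj] (K : ℕ) (hK : 1 ≤ K)
    (hn : K + 1 ≤ Fintype.card V) (κ y : V → ℤ) (w : V → V → ℤ)
    (hfeas : MP2Feasible G K κ y w)
    (r : V ≃ Fin (Fintype.card V)) (hr : Respects G K κ w r)
    (m : ℕ) (c : ℕ → V) (hcyc : IsDirectedCycle G m c) (ι : ℕ) (hι : ι < m) :
    ∑ i ∈ Finset.range m, w (c i) (c ((i + 1) % m))
      ≤ (m : ℤ) - 1 + (if m ≤ K + 1 then 1 else 0) * κ (c ι) := by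
  
  have kappa01 := hfeas.kappa01
  have w01 := hfeas.w01
  have cliquecard := clique_card hfeas
  have wek : ∀ v u : V, G.Adj v u → κ v = 1 → w v u = κ u :=
    fun v u hadj hv => witness_eq_kappa hfeas hadj hv
  have hr2 := hr.2
  obtain ⟨hm2, hinj, hadj⟩ := hcyc
  have hm0 : 0 < m := by omega
  by_cases hall : ∀ i < m, w (c i) (c ((i + 1) % m)) = 1
  · -- all arcs have w = 1
    have hsum : ∑ i ∈ Finset.range m, w (c i) (c ((i + 1) % m)) = (m : ℤ) := by
      rw [Finset.sum_congr rfl (fun i hi => hall i (Finset.mem_range.mp hi))]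
      simp
    -- claim: all κ (c i) = 1 for i < m
    have hall1 : ∀ i < m, κ (c i) = 1 := by
      by_cases hex : ∃ i0, i0 < m ∧ κ (c i0) = 1
      · obtain ⟨i0, hi0, hκ0⟩ := hex
        have key : ∀ t, κ (c ((i0 + t) % m)) = 1 := by
          intro t
          induction t with
          | zero => simpa [Nat.mod_eq_of_lt hi0] using hκ0
          | succ t ih =>
            have hlt : (i0 + t) % m < m := Nat.mod_lt _ hm0
            have harc := hadj _ hlt
            have hw := hall _ hlt
            have := wek _ _ harc ih
            rw [hw] at this
            have h1m : 1 % m = 1 := Nat.mod_eq_of_lt (by omega)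
            have hmod : ((i0 + t) % m + 1) % m = (i0 + (t + 1)) % m := by
              have h := Nat.add_mod (i0 + t) 1 m
              rw [h1m] at h
              rw [← h, ← Nat.add_assoc]
            rw [hmod] at this
            omega
        intro j hj
        have h1 : i0 + (m - i0 + j) = m + j := by omega
        have := key (m - i0 + j)
        rwa [h1, Nat.add_mod_left, Nat.mod_eq_of_lt hj] at this
      · -- all κ = 0 on the cycle: ranks strictly decrease, contradiction
        exfalso
        push_neg at hex
        have hall0 : ∀ i < m, κ (c i) = 0 := fun i hi => by
          rcases kappa01 (c i) with h | h
          · exact h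
          · exact absurd h (hex i hi)
        have key : ∀ t, (r (c (t % m)) : ℕ) + t ≤ (r (c 0) : ℕ) := by
          intro t
          induction t with
          | zero => simp [Nat.zero_mod]
          | succ t ih =>
            have hlt : t % m < m := Nat.mod_lt _ hm0
            have hlt2 : (t % m + 1) % m < m := Nat.mod_lt _ hm0
            have hdec := hr2 _ _ (hadj _ hlt) (hall0 _ hlt) (hall0 _ hlt2) (hall _ hlt)
            have h1m : 1 % m = 1 := Nat.mod_eq_of_lt (by omega)
            have hmod : (t % m + 1) % m = (t + 1) % m := by
              have h := Nat.add_mod t 1 m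
              rw [h1m] at h
              rw [← h]
            rw [hmod] at hdec
            omega
        have := key m
        rw [Nat.mod_self] at this
        omega
    -- the cycle vertices are distinct elements of the clique, so m ≤ K + 1
    have himg : (Finset.range m).image c ⊆ Finset.univ.filter (fun x => κ x = 1) := by
      intro x hx
      rw [Finset.mem_image] at hx
      obtain ⟨i, hi, rfl⟩ := hx
      exact Finset.mem_filter.mpr ⟨Finset.mem_univ _, hall1 i (Finset.mem_range.mp hi)⟩
    have hcard : ((Finset.range m).image c).card = m := by
      rw [Finset.card_image_of_injOn (fun i hi j hj h =>
        hinj i j (Finset.mem_range.mp hi) (Finset.mem_range.mp hj) h)]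
      simp
    have hmK : m ≤ K + 1 := by
      have := Finset.card_le_card himg
      rw [hcard, cliquecard] at this
      exact this
    rw [hsum, if_pos hmK, hall1 ι hι]
    ring_nf
    omega
  · -- some arc has w = 0
    push_neg at hall
    obtain ⟨i0, hi0, hwi0⟩ := hall
    have hw0 : w (c i0) (c ((i0 + 1) % m)) = 0 := by
      rcases w01 _ _ (hadj i0 hi0) with h | h
      · exact h
      · exact absurd h hwi0
    have hbound : ∑ i ∈ Finset.range m, w (c i) (c ((i + 1) % m))
        ≤ ∑ i ∈ Finset.range m, (if i = i0 then (0 : ℤ) else 1) := by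
      apply Finset.sum_le_sum
      intro i hi
      by_cases h : i = i0
      · subst h; rw [hw0, if_pos rfl]
      · rw [if_neg h]
        rcases w01 _ _ (hadj i (Finset.mem_range.mp hi)) with h' | h' <;> omega
    have hconst : ∑ i ∈ Finset.range m, (if i = i0 then (0 : ℤ) else 1) = (m : ℤ) - 1 := by
      have h1 : ∑ i ∈ Finset.range m, (if i = i0 then (0 : ℤ) else 1)
          = ∑ i ∈ Finset.range m, ((1 : ℤ) - if i = i0 then 1 else 0) :=
        Finset.sum_congr rfl (fun i _ => by split <;> ring)
      rw [h1, Finset.sum_sub_distrib, Finset.sum_const, Finset.sum_ite_eq'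
        (Finset.range m) i0 (fun _ => (1 : ℤ)), if_pos (Finset.mem_range.mpr hi0)]
      simp
    have hκι : 0 ≤ κ (c ι) := by rcases kappa01 (c ι) with h | h <;> omega
    have hind : (0 : ℤ) ≤ (if m ≤ K + 1 then 1 else 0) * κ (c ι) := by
      split <;> simp [hκι]
    omega
end

section
/- Let G be connected. Suppose (κ, w, y) is feasible for the master problem MP2 and, for every directed cycle C = (V^C, A^C) in the digraph on V whose arcs are the ordered pairs (v,u) with {v,u} ∈ E, and for every vertex ι ∈ V^C, the cycle-breaking inequality ∑_{(v,u)∈A^C} w_{vu} ≤ |V^C| − 1 + 𝟙(|V^C| ≤ K+1)·κ(ι) holds, where 𝟙(·) equals 1 if the enclosed condition is true and 0 otherwise. Then there exists a bijection r : V → {0, 1, ..., n-1} respecting (κ, w); that is, (κ, w, y) belongs to the projection onto the (κ, w, y)-variables of the feasible region of the extended formulation EF. -/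
open Finset

/-!
Call `u` a witness predecessor of `v` when both lie outside the initial clique, are adjacent and
`w v u = 1`. A cycle of this relation would violate its own cycle-breaking cut: all its arcs carry
`w = 1` while its vertices have `κ = 0`, so the cut bounds the `m` arcs' weight by `m - 1`. Hence
the relation "clique vertices come first, then witnesses before the vertices they witness" is
acyclic; any linear extension of it, numbered from `0`, is a bijection respecting `(κ, w)`, and
the clique vertices, being `K + 1` in number and first, get ranks `≤ K`.
-/

open Relation

section ClosedWalk

variable {α : Type*} {S : α → α → Prop}

structure IsClosedWalk (S : α → α → Prop) (m : ℕ) (c : ℕ → α) : Prop where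
  pos : 0 < m
  closed : c m = c 0
  rel : ∀ i < m, S (c i) (c (i + 1))

theorem Relation.TransGen.exists_walk {a b : α} (h : TransGen S a b) :
    ∃ m, 0 < m ∧ ∃ c : ℕ → α,
      c 0 = a ∧ c m = b ∧ ∀ i < m, S (c i) (c (i + 1)) := by
  induction h with
  | @single b hab =>
    refine ⟨1, one_pos, fun i => if i = 0 then a else b, rfl, rfl, fun i hi => ?_⟩
    obtain rfl : i = 0 := by omega
    simpa using hab
  | @tail b d _ hbd ih =>
    obtain ⟨m, hm, c, hc0, hcm, hstep⟩ := ih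
    refine ⟨m + 1, m.succ_pos, fun i => if i = m + 1 then d else c i, by simpa using hc0,
      by simp, fun i hi => ?_⟩
    rcases Nat.lt_or_ge i m with him | him
    · simpa [show i ≠ m + 1 by omega, show i ≠ m by omega] using hstep i him
    · obtain rfl : i = m := by omega
      simpa [hcm] using hbd

theorem Relation.TransGen.exists_isClosedWalk {a : α} (h : TransGen S a a) :
    ∃ m c, IsClosedWalk S m c := by
  obtain ⟨m, hm, c, hc0, hcm, hstep⟩ := h.exists_walk
  exact ⟨m, c, hm, hcm.trans hc0.symm, hstep⟩

namespace IsClosedWalk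

theorem rel_mod {m : ℕ} {c : ℕ → α} (hc : IsClosedWalk S m c) (i : ℕ) (hi : i < m) :
    S (c i) (c ((i + 1) % m)) := by
  rcases Nat.lt_or_ge (i + 1) m with h | h
  · rw [Nat.mod_eq_of_lt h]
    exact hc.rel i hi
  · obtain rfl : m = i + 1 := by omega
    rw [Nat.mod_self, ← hc.closed]
    exact hc.rel i hi

-- Shortcut the walk between two visits of a repeated vertex and recurse.
theorem exists_injOn {m : ℕ} {c : ℕ → α} (hc : IsClosedWalk S m c) :
    ∃ m' c', IsClosedWalk S m' c' ∧ ∀ i j, i < m' → j < m' → c' i = c' j → i = j := by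
  induction m using Nat.strong_induction_on generalizing c with
  | _ m ih =>
  by_cases hinj : ∀ i j, i < m → j < m → c i = c j → i = j
  · exact ⟨m, c, hc, hinj⟩
  obtain ⟨i, j, hij, hjm, hcij⟩ : ∃ i j, i < j ∧ j < m ∧ c i = c j := by
    push Not at hinj
    obtain ⟨i, j, him, hjm, hcij, hne⟩ := hinj
    rcases Nat.lt_or_gt_of_ne hne with h | h
    · exact ⟨i, j, h, hjm, hcij⟩
    · exact ⟨j, i, h, him, hcij.symm⟩
  refine ih (j - i) (by omega) (c := fun t => c (i + t)) ⟨by omega, ?_, fun t ht => ?_⟩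
  · simp [show i + (j - i) = j by omega, hcij]
  · exact hc.rel (i + t) (by omega)

theorem isDirectedCycle {V : Type*} {G : SimpleGraph V} {S : V → V → Prop}
    (hS : ∀ a b, S a b → G.Adj a b) {m : ℕ} {c : ℕ → V} (hc : IsClosedWalk S m c)
    (hinj : ∀ i j, i < m → j < m → c i = c j → i = j) : IsDirectedCycle G m c := by
  refine ⟨?_, hinj, fun i hi => hS _ _ (hc.rel_mod i hi)⟩
  by_contra! hm
  obtain rfl : m = 1 := by have := hc.pos; omega
  have hloop := hS _ _ (hc.rel 0 one_pos)
  rw [hc.closed] at hloop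
  exact hloop.ne rfl

end IsClosedWalk

theorem exists_isDirectedCycle_of_transGen {V : Type*} {G : SimpleGraph V} {S : V → V → Prop}
    (hS : ∀ a b, S a b → G.Adj a b) {a : V} (h : TransGen S a a) :
    ∃ m c, IsDirectedCycle G m c ∧ ∀ i < m, S (c i) (c ((i + 1) % m)) := by
  obtain ⟨m, c, hc⟩ := h.exists_isClosedWalk
  obtain ⟨m', c', hc', hinj⟩ := hc.exists_injOn
  exact ⟨m', c', hc'.isDirectedCycle hS hinj, hc'.rel_mod⟩

end ClosedWalk

section LinearExtension

variable {α : Type*} [Fintype α]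

theorem exists_equiv_fin_lt_of_acyclic {R : α → α → Prop} (hR : ∀ a, ¬ TransGen R a a) :
    ∃ e : α ≃ Fin (Fintype.card α), ∀ a b, R a b → e a < e b := by
  let _ : PartialOrder α :=
    { le := ReflTransGen R
      le_refl := fun _ => ReflTransGen.refl
      le_trans := fun _ _ _ => ReflTransGen.trans
      le_antisymm := fun a b hab hba => by
        rcases reflTransGen_iff_eq_or_transGen.1 hab with rfl | hab
        · rfl
        rcases reflTransGen_iff_eq_or_transGen.1 hba with rfl | hba
        · rfl
        exact (hR a (hab.trans hba)).elim }
  let _ : Fintype (LinearExtension α) := ‹Fintype α›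
  let e := (Fintype.orderIsoFinOfCardEq (LinearExtension α) rfl).symm
  refine ⟨e.toEquiv, fun a b hab => e.strictMono (lt_of_le_of_ne ?_ ?_)⟩
  · exact toLinearExtension.monotone (ReflTransGen.single hab : a ≤ b)
  · rintro rfl
    exact hR a (TransGen.single hab)

theorem Equiv.val_lt_card_filter {n : ℕ} (e : α ≃ Fin n) {p : α → Prop} [DecidablePred p]
    (hp : ∀ a b, p a → ¬ p b → e a < e b) {a : α} (ha : p a) :
    (e a : ℕ) < #{x | p x} := by
  have hle : #(Iic (e a)) ≤ #{x | p x} := by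
    refine card_le_card_of_injOn e.symm (fun i hi => ?_) e.symm.injective.injOn
    simp only [coe_Iic, Set.mem_Iic] at hi
    simp only [coe_filter, mem_univ, true_and, Set.mem_ofPred_eq]
    by_contra hpi
    have := hp a _ ha hpi
    rw [Equiv.apply_symm_apply] at this
    exact absurd hi (not_le.2 this)
  rwa [Fin.card_Iic, Nat.succ_le_iff] at hle

end LinearExtension

theorem sum_eq_card_filter_eq_one {ι : Type*} [Fintype ι] {f : ι → ℤ}
    (hf : ∀ i, f i = 0 ∨ f i = 1) : ∑ i, f i = #{i | f i = 1} := by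
  rw [← sum_boole]
  refine sum_congr rfl fun i _ => ?_
  rcases hf i with h | h <;> simp [h]

section Witness

variable {V : Type*} (G : SimpleGraph V) (κ : V → ℤ) (w : V → V → ℤ)

/-- `u` witnesses `v`, both outside the initial clique. -/
def WitnessArc (v u : V) : Prop :=
  G.Adj v u ∧ κ v = 0 ∧ κ u = 0 ∧ w v u = 1

def MustPrecede (a b : V) : Prop :=
  (κ a = 1 ∧ κ b ≠ 1) ∨ WitnessArc G κ w b a

variable {G κ w}

theorem not_transGen_witnessArc_self {K : ℕ}
    (hcuts : ∀ (m : ℕ) (c : ℕ → V), IsDirectedCycle G m c → ∀ ι < m,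
      ∑ i ∈ Finset.range m, w (c i) (c ((i + 1) % m))
        ≤ (m : ℤ) - 1 + (if m ≤ K + 1 then 1 else 0) * κ (c ι))
    (v : V) : ¬ TransGen (WitnessArc G κ w) v v := by
  intro hv
  obtain ⟨m, c, hcyc, harc⟩ := exists_isDirectedCycle_of_transGen (fun _ _ h => h.1) hv
  have hm : 0 < m := by have := hcyc.1; omega
  have hweight : ∑ i ∈ range m, w (c i) (c ((i + 1) % m)) = m := by
    rw [sum_congr rfl fun i hi => (harc i (mem_range.1 hi)).2.2.2]
    simp
  have hcut := hcuts m c hcyc 0 hm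
  rw [hweight, (harc 0 hm).2.1] at hcut
  omega

theorem MustPrecede.target_ne_one {a b : V} (h : MustPrecede G κ w a b) : κ b ≠ 1 := by
  rcases h with h | h
  · exact h.2
  · simp [h.2.1]

theorem transGen_swap_witnessArc_of_transGen_mustPrecede {a b : V}
    (h : TransGen (MustPrecede G κ w) a b) (ha : κ a ≠ 1) :
    TransGen (Function.swap (WitnessArc G κ w)) a b := by
  induction h using TransGen.head_induction_on with
  | single hab => exact TransGen.single (hab.resolve_left fun h => ha h.1)
  | head hac _ ih =>
    exact TransGen.head (hac.resolve_left fun h => ha h.1) (ih hac.target_ne_one)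

theorem not_transGen_mustPrecede_self (hW : ∀ v, ¬ TransGen (WitnessArc G κ w) v v) (v : V) :
    ¬ TransGen (MustPrecede G κ w) v v := by
  intro hv
  obtain ⟨u, _, huv⟩ := TransGen.tail'_iff.1 hv
  exact hW v (transGen_swap.1 (transGen_swap_witnessArc_of_transGen_mustPrecede hv
    huv.target_ne_one))

end Witness

theorem mp2_with_cycle_cuts_projects_onto_EF_general {V : Type*} [Fintype V] [DecidableEq V]
    (G : SimpleGraph V) [DecidableRel G.Adj] (K : ℕ)
    (κ y : V → ℤ) (w : V → V → ℤ)
    (hfeas : MP2Feasible G K κ y w)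
    (hcuts : ∀ (m : ℕ) (c : ℕ → V), IsDirectedCycle G m c → ∀ ι < m,
      ∑ i ∈ Finset.range m, w (c i) (c ((i + 1) % m))
        ≤ (m : ℤ) - 1 + (if m ≤ K + 1 then 1 else 0) * κ (c ι)) :
    ∃ r : V ≃ Fin (Fintype.card V), Respects G K κ w r := by
  have hacyclic := not_transGen_mustPrecede_self (not_transGen_witnessArc_self hcuts)
  obtain ⟨r, hr⟩ := exists_equiv_fin_lt_of_acyclic hacyclic
  have hclique : #{v | κ v = 1} = K + 1 := by
    have := (sum_eq_card_filter_eq_one hfeas.kappa01).symm.trans hfeas.cliqueSize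
    omega
  refine ⟨r, fun v hv => ?_, fun v u hadj hv hu hw => hr u v (Or.inr ⟨hadj, hv, hu, hw⟩)⟩
  have := r.val_lt_card_filter (fun a b ha hb => hr a b (Or.inl ⟨ha, hb⟩)) hv
  omega

theorem mp2_with_cycle_cuts_projects_onto_EF {V : Type*} [Fintype V] [DecidableEq V]
    (G : SimpleGraph V) [DecidableRel G.Adj] (hconn : G.Connected) (K : ℕ) (hK : 1 ≤ K)
    (hn : K + 1 ≤ Fintype.card V) (κ y : V → ℤ) (w : V → V → ℤ)
    (hfeas : MP2Feasible G K κ y w)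
    (hcuts : ∀ (m : ℕ) (c : ℕ → V), IsDirectedCycle G m c → ∀ ι < m,
      ∑ i ∈ Finset.range m, w (c i) (c ((i + 1) % m))
        ≤ (m : ℤ) - 1 + (if m ≤ K + 1 then 1 else 0) * κ (c ι)) :
    ∃ r : V ≃ Fin (Fintype.card V), Respects G K κ w r :=
  mp2_with_cycle_cuts_projects_onto_EF_general G K κ y w hfeas hcuts
end

section
/- Suppose (κ, w, y, r) is feasible for the extended formulation EF. Then for every vertex v ∈ V, the inequality y(v) ≤ 1 − κ(v) holds; in particular, every vertex selected for the initial clique satisfies y(v) = 0. -/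
open Finset

theorem EF_valid_inequality {V : Type*} [Fintype V] [DecidableEq V]
    (G : SimpleGraph V) [DecidableRel G.Adj] (K : ℕ) (hK : 1 ≤ K)
    (hn : K + 1 ≤ Fintype.card V) (κ y : V → ℤ) (w : V → V → ℤ)
    (hfeas : MP2Feasible G K κ y w)
    (r : V ≃ Fin (Fintype.card V)) (hr : Respects G K κ w r) :
    (∀ v, y v ≤ 1 - κ v) ∧ ∀ v, κ v = 1 → y v = 0 := by
  classical
  -- the clique set
  set S : Finset V := Finset.univ.filter (fun u => κ u = 1) with hS
  have hcard : (S.card : ℤ) = (K : ℤ) + 1 := by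
    have : ∑ v, κ v = ∑ v ∈ S, (1 : ℤ) := by
      rw [Finset.sum_filter]
      apply Finset.sum_congr rfl
      intro v _
      rcases hfeas.kappa01 v with h | h <;> simp [h]
    have h2 := hfeas.cliqueSize
    rw [this, Finset.sum_const, nsmul_eq_mul, mul_one] at h2
    exact h2
  have key : ∀ v, κ v = 1 → y v = 0 := by
    intro v hv
    have hvS : v ∈ S := by simp [hS, hv]
    have hTsub : S.erase v ⊆ G.neighborFinset v := by
      intro u hu
      have huv : u ≠ v := Finset.ne_of_mem_erase hu
      have huS : u ∈ S := Finset.mem_of_mem_erase hu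
      have hκu : κ u = 1 := by simpa [hS] using huS
      rw [SimpleGraph.mem_neighborFinset]
      by_contra hadj
      have := hfeas.nonadjClique v u (Ne.symm huv) hadj
      rw [hv, hκu] at this; omega
    -- lower bound the linking sum
    have h1 : (K : ℤ) ≤ ∑ u ∈ S.erase v, w v u := by
      have hc : ((S.erase v).card : ℤ) = K := by
        rw [Finset.card_erase_of_mem hvS]
        have : 1 ≤ S.card := Finset.card_pos.mpr ⟨v, hvS⟩
        push_cast [Nat.cast_sub this]
        omega
      calc (K : ℤ) = ∑ _u ∈ S.erase v, (1 : ℤ) := by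
            rw [Finset.sum_const, nsmul_eq_mul, mul_one, hc]
        _ ≤ ∑ u ∈ S.erase v, w v u := by
            apply Finset.sum_le_sum
            intro u hu
            have hκu : κ u = 1 := by
              have := Finset.mem_of_mem_erase hu
              simpa [hS] using this
            have hadj : G.Adj v u := by
              have := hTsub hu; rwa [SimpleGraph.mem_neighborFinset] at this
            have := hfeas.cliqueWitness u v hadj.symm
            rwa [hκu] at this
    have h2 : ∑ u ∈ S.erase v, w v u ≤ ∑ u ∈ G.neighborFinset v, w v u := by
      apply Finset.sum_le_sum_of_subset_of_nonneg hTsub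
      intro u hu _
      rcases hfeas.w01 v u ((SimpleGraph.mem_neighborFinset _ _ _).mp hu) with h | h <;> omega
    have h3 := hfeas.linking v
    rw [hv] at h3
    rcases hfeas.y01 v with h | h
    · exact h
    · rw [h] at h3; linarith
  refine ⟨fun v => ?_, key⟩
  rcases hfeas.kappa01 v with h | h
  · rcases hfeas.y01 v with h' | h' <;> omega
  · have := key v h; omega
end

section
/- Suppose (κ, w, y) is feasible for the master problem MP2 and v is a vertex with κ(v) = 1. Then v has exactly K witnesses, and they are exactly the other K vertices of the initial clique: w_{vu} = 1 if and only if u is a neighbour of v with κ(u) = 1. -/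
open Finset

theorem mp2_clique_vertex_witnesses {V : Type*} [Fintype V] [DecidableEq V]
    (G : SimpleGraph V) [DecidableRel G.Adj] (K : ℕ) (hK : 1 ≤ K)
    (hn : K + 1 ≤ Fintype.card V) (κ y : V → ℤ) (w : V → V → ℤ)
    (hfeas : MP2Feasible G K κ y w) (v : V) (hv : κ v = 1) :
    (∑ u ∈ G.neighborFinset v, w v u = (K : ℤ)) ∧
    ∀ u, G.Adj v u → (w v u = 1 ↔ κ u = 1) := by
  obtain ⟨hk01, hy01, hw01, hsize, hnonadj, hwit, hlink⟩ := hfeas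
  -- every clique vertex other than v is adjacent to v
  have hadj : ∀ u, u ≠ v → κ u = 1 → G.Adj v u := by
    intro u hne hu
    by_contra h
    have := hnonadj v u (Ne.symm hne) h
    omega
  -- the clique has K+1 vertices
  have hcardfil : ((Finset.univ.filter (fun u => κ u = 1)).card : ℤ) = (K : ℤ) + 1 := by
    rw [← hsize, Finset.card_filter]
    push_cast
    refine (Finset.sum_congr rfl ?_).symm
    intro u _
    rcases hk01 u with h | h <;> simp [h]
  set S := (G.neighborFinset v).filter (fun u => κ u = 1) with hSdef
  have hSeq : S = (Finset.univ.filter (fun u => κ u = 1)).erase v := by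
    ext u
    simp only [hSdef, Finset.mem_filter, Finset.mem_erase, SimpleGraph.mem_neighborFinset,
      Finset.mem_univ, true_and]
    constructor
    · rintro ⟨hadj', hu⟩
      exact ⟨hadj'.ne', hu⟩
    · rintro ⟨hne, hu⟩
      exact ⟨hadj u hne hu, hu⟩
  have hvmem : v ∈ Finset.univ.filter (fun u => κ u = 1) := by simp [hv]
  have hScard : (S.card : ℤ) = (K : ℤ) := by
    rw [hSeq, Finset.card_erase_of_mem hvmem]
    have hpos : 0 < (Finset.univ.filter (fun u => κ u = 1)).card := Finset.card_pos.mpr ⟨v, hvmem⟩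
    push_cast [Nat.cast_sub (Nat.one_le_iff_ne_zero.mpr hpos.ne')]
    omega
  have hwS : ∀ u ∈ S, w v u = 1 := by
    intro u hu
    simp only [hSdef, Finset.mem_filter, SimpleGraph.mem_neighborFinset] at hu
    have h1 : κ u ≤ w v u := hwit u v hu.1.symm
    rcases hw01 v u hu.1 with h | h
    · omega
    · exact h
  have hsplit := Finset.sum_filter_add_sum_filter_not (G.neighborFinset v)
    (fun u => κ u = 1) (fun u => w v u)
  have hSsum : ∑ u ∈ S, w v u = (K : ℤ) := by
    rw [Finset.sum_congr rfl hwS, Finset.sum_const, nsmul_eq_mul, mul_one, hScard]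
  have hnonneg : ∀ u ∈ (G.neighborFinset v).filter (fun u => ¬ κ u = 1),
      0 ≤ w v u := by
    intro u hu
    simp only [Finset.mem_filter, SimpleGraph.mem_neighborFinset] at hu
    rcases hw01 v u hu.1 with h | h <;> omega
  have hlinkv := hlink v
  rw [hv] at hlinkv
  have hsum2nonneg : 0 ≤ ∑ u ∈ (G.neighborFinset v).filter (fun u => ¬ κ u = 1), w v u :=
    Finset.sum_nonneg hnonneg
  have hyv := hy01 v
  have hsum2 : ∑ u ∈ (G.neighborFinset v).filter (fun u => ¬ κ u = 1), w v u = 0 := by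
    rw [← hSdef] at hsplit
    omega
  have hmain : ∑ u ∈ G.neighborFinset v, w v u = (K : ℤ) := by
    rw [← hSdef] at hsplit
    omega
  refine ⟨hmain, ?_⟩
  intro u hadju
  constructor
  · intro hwu
    by_contra hku
    have humem : u ∈ (G.neighborFinset v).filter (fun u => ¬ κ u = 1) := by
      simp [hadju, hku]
    have := (Finset.sum_eq_zero_iff_of_nonneg hnonneg).mp hsum2 u humem
    omega
  · intro hku
    exact hwS u (by simp [hSdef, hadju, hku])
end

section
/- Suppose that for every clique C of G of size K + 2 there is no vertex v ∉ C with at least K + 1 neighbours in C. Then for every DVOP order rank for (G, K) with n ≥ K + 3, at least one of the vertices at ranks K + 1 and K + 2 is a double. -/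
open Finset

/-- A DVOP order for `(G, K)`: a bijection `rank : V → {0, …, n-1}` such that the vertices
of rank `< K` (i.e. `≤ K - 1`) induce a clique, and every vertex of rank `≥ K` has at least
`K` adjacent predecessors. -/
def IsDVOPOrder {V : Type*} [Fintype V] [DecidableEq V] (G : SimpleGraph V)
    [DecidableRel G.Adj] (K : ℕ) (rank : V ≃ Fin (Fintype.card V)) : Prop :=
  (∀ v u, v ≠ u → (rank v : ℕ) < K → (rank u : ℕ) < K → G.Adj v u) ∧
  (∀ v, K ≤ (rank v : ℕ) →
    K ≤ ((G.neighborFinset v).filter (fun u => (rank u : ℕ) < (rank v : ℕ))).card)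

/-- The number of adjacent predecessors of `v` in the order given by `rank`. -/
def numAdjPred {V : Type*} [Fintype V] [DecidableEq V] (G : SimpleGraph V)
    [DecidableRel G.Adj] (rank : V ≃ Fin (Fintype.card V)) (v : V) : ℕ :=
  ((G.neighborFinset v).filter (fun u => (rank u : ℕ) < (rank v : ℕ))).card

lemma card_filter_fin_lt (n r : ℕ) (h : r ≤ n) :
    (univ.filter fun i : Fin n => (i:ℕ) < r).card = r := by
  rcases eq_or_lt_of_le h with rfl | h'
  · rw [Finset.filter_true_of_mem (fun i _ => i.isLt), Finset.card_univ, Fintype.card_fin]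
  · have : (univ.filter fun i : Fin n => (i:ℕ) < r) = Finset.Iio ⟨r, h'⟩ := by
      ext i; simp [Fin.lt_def]
    rw [this, Fin.card_Iio]

lemma card_pred {V : Type*} [Fintype V] [DecidableEq V]
    (rank : V ≃ Fin (Fintype.card V)) (r : ℕ) (h : r ≤ Fintype.card V) :
    (univ.filter fun y : V => (rank y : ℕ) < r).card = r := by
  have : (univ.filter fun y : V => (rank y : ℕ) < r)
      = (univ.filter fun i : Fin (Fintype.card V) => (i:ℕ) < r).map rank.symm.toEmbedding := by
    ext y
    simp only [Finset.mem_map, Finset.mem_filter, Finset.mem_univ, true_and,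
      Equiv.coe_toEmbedding]
    constructor
    · intro hy; exact ⟨rank y, hy, rank.symm_apply_apply y⟩
    · rintro ⟨i, hi, rfl⟩; simpa using hi
  rw [this, Finset.card_map, card_filter_fin_lt _ _ h]

lemma pred_subset {V : Type*} [Fintype V] [DecidableEq V] (G : SimpleGraph V)
    [DecidableRel G.Adj] (rank : V ≃ Fin (Fintype.card V)) (x : V) :
    ((G.neighborFinset x).filter (fun u => (rank u : ℕ) < (rank x : ℕ)))
      ⊆ univ.filter fun y : V => (rank y : ℕ) < (rank x : ℕ) := by
  intro y hy
  simp only [Finset.mem_filter] at hy ⊢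
  exact ⟨Finset.mem_univ y, hy.2⟩

lemma adj_all_pred {V : Type*} [Fintype V] [DecidableEq V] (G : SimpleGraph V)
    [DecidableRel G.Adj] (rank : V ≃ Fin (Fintype.card V)) (x : V)
    (hfull : (rank x : ℕ) ≤ numAdjPred G rank x) :
    ∀ y, (rank y : ℕ) < (rank x : ℕ) → G.Adj x y := by
  have hcard : (univ.filter fun y : V => (rank y : ℕ) < (rank x : ℕ)).card = (rank x : ℕ) :=
    card_pred rank _ (le_of_lt (rank x).isLt)
  have heq := Finset.eq_of_subset_of_card_le (pred_subset G rank x) (by rw [hcard]; exact hfull)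
  intro y hy
  have : y ∈ ((G.neighborFinset x).filter (fun u => (rank u : ℕ) < (rank x : ℕ))) := by
    rw [heq]; exact Finset.mem_filter.mpr ⟨Finset.mem_univ y, hy⟩
  exact (SimpleGraph.mem_neighborFinset _ _ _).mp (Finset.mem_filter.mp this).1

theorem dvop_double_at_K1_or_K2 {V : Type*} [Fintype V] [DecidableEq V]
    (G : SimpleGraph V) [DecidableRel G.Adj] (K : ℕ) (hK : 1 ≤ K)
    (hext : ∀ C : Finset V, G.IsNClique (K + 2) C →
      ∀ v ∉ C, ¬ (K + 1 ≤ (G.neighborFinset v ∩ C).card))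
    (hn : K + 3 ≤ Fintype.card V)
    (rank : V ≃ Fin (Fintype.card V)) (h : IsDVOPOrder G K rank) :
    ∀ u v, (rank u : ℕ) = K + 1 → (rank v : ℕ) = K + 2 →
      numAdjPred G rank u = K ∨ numAdjPred G rank v = K := by
  intro u v hu hv
  by_contra hc
  push_neg at hc
  obtain ⟨hu', hv'⟩ := hc
  -- u's adj pred count is K+1
  have hKu : K ≤ numAdjPred G rank u := h.2 u (by omega)
  have hu_le : numAdjPred G rank u ≤ K + 1 := by
    unfold numAdjPred
    have := Finset.card_le_card (pred_subset G rank u)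
    rw [card_pred rank _ (rank u).isLt.le] at this
    omega
  have hu_full : (rank u : ℕ) ≤ numAdjPred G rank u := by omega
  -- v has at least K+1 adjacent predecessors
  have hKv : K + 1 ≤ numAdjPred G rank v := by
    have h2 : K ≤ numAdjPred G rank v := h.2 v (by omega)
    omega
  -- the clique C
  set C : Finset V := univ.filter fun y : V => (rank y : ℕ) < K + 2 with hC
  have hCcard : C.card = K + 2 := card_pred rank _ (by omega)
  have hclique : G.IsNClique (K + 2) C := by
    constructor
    · intro x hx y hy hxy
      simp only [hC, Finset.coe_filter, Set.mem_setOf_eq, Finset.mem_univ, true_and] at hx hy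
      have hne : (rank x : ℕ) ≠ (rank y : ℕ) := by
        intro he
        exact hxy (rank.injective (Fin.ext he))
      -- wlog rank y < rank x
      rcases lt_or_gt_of_ne hne with hlt | hlt
      · -- rank x < rank y: symmetric
        rcases Nat.lt_or_ge (rank y : ℕ) K with hyK | hyK
        · exact h.1 x y hxy (by omega) hyK
        · rcases Nat.eq_or_lt_of_le hyK with heq | hgt
          · exact (adj_all_pred G rank y (heq ▸ h.2 y (le_of_eq heq)) x hlt).symm
          · have : (rank y : ℕ) = K + 1 := by omega
            have : y = u := rank.injective (Fin.ext (by rw [this, hu]))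
            subst this
            exact (adj_all_pred G rank y hu_full x (by omega)).symm
      · rcases Nat.lt_or_ge (rank x : ℕ) K with hxK | hxK
        · exact h.1 x y hxy hxK (by omega)
        · rcases Nat.eq_or_lt_of_le hxK with heq | hgt
          · exact adj_all_pred G rank x (heq ▸ h.2 x (le_of_eq heq)) y hlt
          · have : (rank x : ℕ) = K + 1 := by omega
            have : x = u := rank.injective (Fin.ext (by rw [this, hu]))
            subst this
            exact adj_all_pred G rank x hu_full y (by omega)
    · exact hCcard
  have hvC : v ∉ C := by simp [hC, hv]
  refine hext C hclique v hvC ?_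
  calc K + 1 ≤ numAdjPred G rank v := hKv
    _ ≤ (G.neighborFinset v ∩ C).card := by
        apply Finset.card_le_card
        intro y hy
        simp only [Finset.mem_filter, SimpleGraph.mem_neighborFinset] at hy
        simp only [Finset.mem_inter, SimpleGraph.mem_neighborFinset, hC, Finset.mem_filter,
          Finset.mem_univ, true_and]
        exact ⟨hy.1, by omega⟩
end

section
/- Suppose G contains no clique of size K + 2, and suppose that for every set S = C₁ ∪ C₂, where C₁ and C₂ are cliques of G of size K + 1 with |C₁ ∩ C₂| = K, there is no vertex v ∉ S with at least K + 1 neighbours in S. Then for every DVOP order rank for (G, K) with n ≥ K + 3, the vertex at rank K + 2 is a double. -/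
open Finset

lemma card_rank_lt {V : Type*} [Fintype V] [DecidableEq V]
    (rank : V ≃ Fin (Fintype.card V)) (m : ℕ) (hm : m ≤ Fintype.card V) :
    (univ.filter fun u => (rank u : ℕ) < m).card = m := by
  rcases eq_or_lt_of_le hm with h | h
  · have : (univ.filter fun u => (rank u : ℕ) < m) = univ := by
      apply filter_true_of_mem
      intro u _
      exact h ▸ (rank u).isLt
    rw [this, Finset.card_univ, ← h]
  · have := Finset.card_equiv rank (s := univ.filter fun u => (rank u : ℕ) < m)
      (t := Finset.Iio (⟨m, h⟩ : Fin (Fintype.card V))) ?_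
    · rw [this, Fin.card_Iio]
    · intro u
      simp [Fin.lt_def]

theorem dvop_double_at_K2 {V : Type*} [Fintype V] [DecidableEq V]
    (G : SimpleGraph V) [DecidableRel G.Adj] (K : ℕ) (hK : 1 ≤ K)
    (hclique : ∀ s : Finset V, ¬ G.IsNClique (K + 2) s)
    (hext : ∀ C₁ C₂ : Finset V, G.IsNClique (K + 1) C₁ → G.IsNClique (K + 1) C₂ →
      (C₁ ∩ C₂).card = K →
      ∀ v ∉ C₁ ∪ C₂, ¬ (K + 1 ≤ (G.neighborFinset v ∩ (C₁ ∪ C₂)).card))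
    (hn : K + 3 ≤ Fintype.card V)
    (rank : V ≃ Fin (Fintype.card V)) (h : IsDVOPOrder G K rank) :
    ∀ v, (rank v : ℕ) = K + 2 → numAdjPred G rank v = K := by
  intro v hv
  obtain ⟨h1, h2⟩ := h
  -- adjacent predecessors finset
  have hAsub : ∀ w : V, (G.neighborFinset w).filter (fun u => (rank u : ℕ) < (rank w : ℕ))
      ⊆ univ.filter (fun u => (rank u : ℕ) < (rank w : ℕ)) :=
    fun w => Finset.filter_subset_filter _ (Finset.subset_univ _)
  -- if a vertex has rank r ≤ n and at least r adjacent predecessors, it's adjacent to all preds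
  have hallAdj : ∀ w : V, (rank w : ℕ) ≤
        ((G.neighborFinset w).filter (fun u => (rank u : ℕ) < (rank w : ℕ))).card →
        ∀ u : V, (rank u : ℕ) < (rank w : ℕ) → G.Adj w u := by
    intro w hw u hu
    have hcard := card_rank_lt rank (rank w) (le_of_lt (rank w).isLt)
    have heq : (G.neighborFinset w).filter (fun u => (rank u : ℕ) < (rank w : ℕ))
        = univ.filter (fun u => (rank u : ℕ) < (rank w : ℕ)) := by
      apply Finset.eq_of_subset_of_card_le (hAsub w)
      rw [hcard]; exact hw
    have : u ∈ (G.neighborFinset w).filter (fun u => (rank u : ℕ) < (rank w : ℕ)) := by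
      rw [heq]
      simp only [Finset.mem_filter, Finset.mem_univ, true_and]
      exact hu
    simp only [Finset.mem_filter, SimpleGraph.mem_neighborFinset] at this
    exact this.1
  -- key vertices
  have hK1n : K + 1 < Fintype.card V := by omega
  set w₁ : V := rank.symm ⟨K + 1, hK1n⟩ with hw₁
  have hrw₁ : (rank w₁ : ℕ) = K + 1 := by simp [hw₁]
  -- C₁ : vertices of rank ≤ K
  set C₁ : Finset V := univ.filter (fun u => (rank u : ℕ) < K + 1) with hC₁
  have hC₁card : C₁.card = K + 1 := card_rank_lt rank (K + 1) (by omega)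
  have hmemC₁ : ∀ u, u ∈ C₁ ↔ (rank u : ℕ) < K + 1 := by intro u; simp [hC₁]
  have hC₁clique : G.IsNClique (K + 1) C₁ := by
    constructor
    · rw [SimpleGraph.isClique_iff]
      intro a ha b hb hab
      have ha' := (hmemC₁ a).mp (Finset.mem_coe.mp ha)
      have hb' := (hmemC₁ b).mp (Finset.mem_coe.mp hb)
      rcases lt_or_ge (rank a : ℕ) K with ha2 | ha2
      · rcases lt_or_ge (rank b : ℕ) K with hb2 | hb2
        · exact h1 a b hab ha2 hb2
        · -- rank b = K
          have hbK : (rank b : ℕ) = K := by omega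
          exact (hallAdj b (hbK.trans_le (h2 b hbK.ge)) a (by omega)).symm
      · have haK : (rank a : ℕ) = K := by omega
        have hb2 : (rank b : ℕ) < K := by
          rcases lt_or_ge (rank b : ℕ) K with hb2 | hb2
          · exact hb2
          · exfalso; apply hab
            exact rank.injective (Fin.ext (by omega))
        exact hallAdj a (haK.trans_le (h2 a haK.ge)) b (by omega)
    · exact hC₁card
  -- A₁ : adjacent predecessors of w₁
  set A₁ : Finset V := (G.neighborFinset w₁).filter (fun u => (rank u : ℕ) < (rank w₁ : ℕ))
    with hA₁
  have hA₁subC₁ : A₁ ⊆ C₁ := by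
    intro u hu
    simp only [hA₁, Finset.mem_filter] at hu
    rw [hmemC₁]; omega
  have hA₁le : A₁.card ≤ K := by
    by_contra hc
    push_neg at hc
    have : A₁ = univ.filter (fun u => (rank u : ℕ) < (rank w₁ : ℕ)) := by
      apply Finset.eq_of_subset_of_card_le (hAsub w₁)
      rw [card_rank_lt rank _ (le_of_lt (rank w₁).isLt)]
      exact hrw₁.trans_le hc
    -- then insert w₁ C₁ is a (K+2)-clique
    have hC₁eq : C₁ = univ.filter (fun u => (rank u : ℕ) < (rank w₁ : ℕ)) := by
      rw [hC₁, hrw₁]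
    have hadj : ∀ b ∈ C₁, w₁ ≠ b → G.Adj w₁ b := by
      intro b hb _
      have : b ∈ A₁ := by rw [this, ← hC₁eq]; exact hb
      simp only [hA₁, Finset.mem_filter, SimpleGraph.mem_neighborFinset] at this
      exact this.1
    have hw₁nC₁ : w₁ ∉ C₁ := by rw [hmemC₁]; omega
    apply hclique (insert w₁ C₁)
    constructor
    · rw [Finset.coe_insert]
      exact hC₁clique.isClique.insert hadj
    · rw [Finset.card_insert_of_notMem hw₁nC₁, hC₁card]
  have hA₁ge : K ≤ A₁.card := h2 w₁ (by omega)
  have hA₁card : A₁.card = K := le_antisymm hA₁le hA₁ge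
  -- C₂
  set C₂ : Finset V := insert w₁ A₁ with hC₂
  have hw₁nA₁ : w₁ ∉ A₁ := by
    simp only [hA₁, Finset.mem_filter]
    rintro ⟨-, hlt⟩; omega
  have hC₂card : C₂.card = K + 1 := by
    rw [hC₂, Finset.card_insert_of_notMem hw₁nA₁, hA₁card]
  have hC₂clique : G.IsNClique (K + 1) C₂ := by
    constructor
    · rw [hC₂, Finset.coe_insert]
      apply SimpleGraph.IsClique.insert
      · exact hC₁clique.isClique.subset (by exact_mod_cast Finset.coe_subset.mpr hA₁subC₁)
      · intro b hb _
        simp only [Finset.mem_coe, hA₁, Finset.mem_filter,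
          SimpleGraph.mem_neighborFinset] at hb
        exact hb.1
    · exact hC₂card
  have hw₁nC₁ : w₁ ∉ C₁ := by rw [hmemC₁]; omega
  have hinter : (C₁ ∩ C₂).card = K := by
    have : C₁ ∩ C₂ = A₁ := by
      rw [hC₂, Finset.inter_insert_of_notMem hw₁nC₁]
      exact Finset.inter_eq_right.mpr hA₁subC₁
    rw [this, hA₁card]
  have hunion : C₁ ∪ C₂ = univ.filter (fun u => (rank u : ℕ) < K + 2) := by
    ext u
    simp only [hC₂, Finset.mem_union, Finset.mem_insert, hmemC₁, Finset.mem_filter,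
      Finset.mem_univ, true_and]
    constructor
    · rintro (h' | h' | h')
      · omega
      · rw [h']; omega
      · have := hA₁subC₁ h'; rw [hmemC₁] at this; omega
    · intro h'
      rcases lt_or_ge (rank u : ℕ) (K + 1) with h'' | h''
      · exact Or.inl h''
      · right; left
        exact rank.injective (Fin.ext (by omega))
  have hvnotin : v ∉ C₁ ∪ C₂ := by
    rw [hunion]
    simp only [Finset.mem_filter, Finset.mem_univ, true_and]
    omega
  have hextv := hext C₁ C₂ hC₁clique hC₂clique hinter v hvnotin
  have hAveq : G.neighborFinset v ∩ (C₁ ∪ C₂)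
      = (G.neighborFinset v).filter (fun u => (rank u : ℕ) < (rank v : ℕ)) := by
    rw [hunion, hv]
    ext u
    simp only [Finset.mem_inter, Finset.mem_filter, Finset.mem_univ, true_and]
  rw [hAveq] at hextv
  have hge := h2 v (by omega)
  unfold numAdjPred
  omega
end

section
/- Suppose G contains no clique of size K + 2, and suppose that for every set S = C₁ ∪ C₂ ∪ {v}, where C₁ and C₂ are cliques of G of size K + 1 with |C₁ ∩ C₂| = K and v ∉ C₁ ∪ C₂ is a vertex with at least K + 1 neighbours in C₁ ∪ C₂, there is no vertex v' ∉ S with at least K + 1 neighbours in S. Then for every DVOP order rank for (G, K) with n ≥ K + 4, at least one of the vertices at ranks K + 2 and K + 3 is a double. -/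
set_option maxHeartbeats 1000000

open Finset

theorem dvop_double_at_K2_or_K3 {V : Type*} [Fintype V] [DecidableEq V]
    (G : SimpleGraph V) [DecidableRel G.Adj] (K : ℕ) (hK : 1 ≤ K)
    (hclique : ∀ s : Finset V, ¬ G.IsNClique (K + 2) s)
    (hext : ∀ C₁ C₂ : Finset V, G.IsNClique (K + 1) C₁ → G.IsNClique (K + 1) C₂ →
      (C₁ ∩ C₂).card = K →
      ∀ v ∉ C₁ ∪ C₂, K + 1 ≤ (G.neighborFinset v ∩ (C₁ ∪ C₂)).card →
      ∀ v' ∉ insert v (C₁ ∪ C₂),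
        ¬ (K + 1 ≤ (G.neighborFinset v' ∩ insert v (C₁ ∪ C₂)).card))
    (hn : K + 4 ≤ Fintype.card V)
    (rank : V ≃ Fin (Fintype.card V)) (h : IsDVOPOrder G K rank) :
    ∀ u v, (rank u : ℕ) = K + 2 → (rank v : ℕ) = K + 3 →
      numAdjPred G rank u = K ∨ numAdjPred G rank v = K := by
  intro u v hu hv
  by_contra hcon
  push_neg at hcon
  obtain ⟨huK, hvK⟩ := hcon
  have hrankinj : ∀ x y : V, (rank x : ℕ) = (rank y : ℕ) → x = y := fun x y hxy =>
    rank.injective (Fin.val_injective hxy)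
  -- cardinality of the set of vertices of rank < m
  have hcard : ∀ m, m ≤ Fintype.card V →
      (univ.filter fun x : V => (rank x : ℕ) < m).card = m := by
    intro m hm
    rw [Finset.card_equiv rank
      (t := univ.filter fun i : Fin (Fintype.card V) => (i : ℕ) < m) (by simp)]
    have himg : ((univ.filter fun i : Fin (Fintype.card V) => (i : ℕ) < m).image Fin.val)
        = Finset.range m := by
      ext k
      simp only [Finset.mem_image, Finset.mem_filter, Finset.mem_univ, true_and,
        Finset.mem_range]
      constructor
      · rintro ⟨i, hi, rfl⟩; exact hi
      · intro hk; exact ⟨⟨k, lt_of_lt_of_le hk hm⟩, hk, rfl⟩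
    calc (univ.filter fun i : Fin (Fintype.card V) => (i : ℕ) < m).card
        = ((univ.filter fun i : Fin (Fintype.card V) => (i : ℕ) < m).image Fin.val).card :=
          (Finset.card_image_of_injective _ Fin.val_injective).symm
      _ = m := by rw [himg, Finset.card_range]
  -- a vertex with as many adjacent predecessors as its rank is adjacent to all predecessors
  have hfull : ∀ x : V, (rank x : ℕ) ≤ numAdjPred G rank x →
      ∀ y : V, (rank y : ℕ) < (rank x : ℕ) → G.Adj x y := by
    intro x hx y hy
    have hsub : ((G.neighborFinset x).filter fun z => (rank z : ℕ) < (rank x : ℕ)) ⊆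
        univ.filter fun z => (rank z : ℕ) < (rank x : ℕ) :=
      Finset.filter_subset_filter _ (Finset.subset_univ _)
    have hcard' : (univ.filter fun z : V => (rank z : ℕ) < (rank x : ℕ)).card = (rank x : ℕ) :=
      hcard _ (le_of_lt (rank x).isLt)
    have heq := Finset.eq_of_subset_of_card_le hsub (by rw [hcard']; exact hx)
    have hy' : y ∈ (G.neighborFinset x).filter fun z => (rank z : ℕ) < (rank x : ℕ) := by
      rw [heq]; exact Finset.mem_filter.mpr ⟨Finset.mem_univ y, hy⟩
    exact (SimpleGraph.mem_neighborFinset G x y).mp (Finset.mem_filter.mp hy').1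
  have key : ∀ x y : V, (rank x : ℕ) < (rank y : ℕ) → (rank y : ℕ) ≤ K → G.Adj y x := by
    intro x y hlt hyK
    by_cases hyK' : (rank y : ℕ) < K
    · exact (h.1 x y (fun e => by subst e; omega) (by omega) hyK').symm
    · have heq : (rank y : ℕ) = K := by omega
      exact hfull y (by rw [heq]; exact h.2 y heq.ge) x hlt
  -- the clique A on ranks 0..K
  set A : Finset V := univ.filter (fun x => (rank x : ℕ) < K + 1) with hA
  have hAcard : A.card = K + 1 := hcard _ (by omega)
  have hAadj : ∀ x ∈ A, ∀ y ∈ A, x ≠ y → G.Adj x y := by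
    intro x hx y hy hxy
    rw [hA, Finset.mem_filter] at hx hy
    have hne : (rank x : ℕ) ≠ (rank y : ℕ) := fun hh => hxy (hrankinj _ _ hh)
    rcases hne.lt_or_gt with hlt | hlt
    · exact (key x y hlt (by omega)).symm
    · exact key y x hlt (by omega)
  have hAclique : G.IsClique (A : Set V) := by
    intro x hx y hy hxy
    exact hAadj x (Finset.mem_coe.mp hx) y (Finset.mem_coe.mp hy) hxy
  have hAN : G.IsNClique (K + 1) A := ⟨hAclique, hAcard⟩
  -- an extra vertex adjacent to all of A gives a forbidden clique
  have hbig : ∀ x : V, x ∉ A → (∀ y ∈ A, G.Adj x y) → False := by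
    intro x hxA hadj
    apply hclique (insert x A)
    constructor
    · rw [Finset.coe_insert]
      exact hAclique.insert (fun b hb _ => hadj b (Finset.mem_coe.mp hb))
    · rw [Finset.card_insert_of_notMem hxA, hAcard]
  -- the vertex of rank K+1 and its neighbours among A
  set w₀ : V := rank.symm ⟨K + 1, by omega⟩ with hw₀
  have hw₀rank : (rank w₀ : ℕ) = K + 1 := by rw [hw₀, Equiv.apply_symm_apply]
  have hw₀A : w₀ ∉ A := by simp [hA, hw₀rank]
  set N : Finset V := (G.neighborFinset w₀).filter (fun z => (rank z : ℕ) < K + 1) with hN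
  have hNsubA : N ⊆ A := by
    intro z hz
    rw [hN, Finset.mem_filter] at hz
    rw [hA, Finset.mem_filter]
    exact ⟨Finset.mem_univ z, hz.2⟩
  have hNge : K ≤ N.card := by
    have := h.2 w₀ (by rw [hw₀rank]; omega)
    rwa [hw₀rank] at this
  have hNle : N.card ≤ K := by
    by_contra hc
    push_neg at hc
    have hNA : N = A := Finset.eq_of_subset_of_card_le hNsubA (by omega)
    refine hbig w₀ hw₀A (fun y hy => ?_)
    rw [← hNA] at hy
    rw [hN, Finset.mem_filter] at hy
    exact (SimpleGraph.mem_neighborFinset G w₀ y).mp hy.1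
  have hNcard : N.card = K := le_antisymm hNle hNge
  -- the second clique C₂
  set C₂ : Finset V := insert w₀ N with hC₂
  have hw₀N : w₀ ∉ N := fun hx => hw₀A (hNsubA hx)
  have hC₂N : G.IsNClique (K + 1) C₂ := by
    constructor
    · rw [hC₂, Finset.coe_insert]
      refine (hAclique.subset (Finset.coe_subset.mpr hNsubA)).insert (fun b hb _ => ?_)
      have hb' := Finset.mem_coe.mp hb
      rw [hN, Finset.mem_filter] at hb'
      exact (SimpleGraph.mem_neighborFinset G w₀ b).mp hb'.1
    · rw [hC₂, Finset.card_insert_of_notMem hw₀N, hNcard]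
  have hinter : (A ∩ C₂).card = K := by
    have : A ∩ C₂ = N := by
      ext z
      rw [Finset.mem_inter, hC₂, Finset.mem_insert]
      constructor
      · rintro ⟨hzA, rfl | hzN⟩
        · exact absurd hzA hw₀A
        · exact hzN
      · intro hzN
        exact ⟨hNsubA hzN, Or.inr hzN⟩
    rw [this, hNcard]
  -- the union A ∪ C₂ is the set of vertices of rank < K + 2
  have hunion : A ∪ C₂ = univ.filter (fun x : V => (rank x : ℕ) < K + 2) := by
    ext z
    simp only [hA, hC₂, Finset.mem_union, Finset.mem_insert, Finset.mem_filter,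
      Finset.mem_univ, true_and]
    constructor
    · rintro (hz | rfl | hzN)
      · omega
      · rw [hw₀rank]; omega
      · have := hNsubA hzN
        rw [hA, Finset.mem_filter] at this
        omega
    · intro hz
      by_cases hz' : (rank z : ℕ) < K + 1
      · exact Or.inl hz'
      · have : (rank z : ℕ) = K + 1 := by omega
        exact Or.inr (Or.inl (hrankinj z w₀ (by rw [this, hw₀rank])))
  -- u is not in A ∪ C₂, and has exactly K + 1 adjacent predecessors
  have huA : u ∉ A := by simp [hA, hu]
  have huAC : u ∉ A ∪ C₂ := by
    rw [hunion, Finset.mem_filter]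
    rintro ⟨_, hc⟩
    omega
  have hule : numAdjPred G rank u ≤ K + 1 := by
    by_contra hc
    push_neg at hc
    refine hbig u huA (fun y hy => ?_)
    rw [hA, Finset.mem_filter] at hy
    exact hfull u (by omega) y (by omega)
  have huge : K ≤ numAdjPred G rank u := h.2 u (by omega)
  have hucard : numAdjPred G rank u = K + 1 := by omega
  have hnbru : G.neighborFinset u ∩ (A ∪ C₂)
      = (G.neighborFinset u).filter (fun z => (rank z : ℕ) < (rank u : ℕ)) := by
    rw [hunion]
    ext z
    simp only [Finset.mem_inter, Finset.mem_filter, Finset.mem_univ, true_and, hu]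
  have huge' : K + 1 ≤ (G.neighborFinset u ∩ (A ∪ C₂)).card := by
    rw [hnbru]
    exact hucard.ge
  -- apply the extension hypothesis
  have H := hext A C₂ hAN hC₂N hinter u huAC huge'
  -- v is not in insert u (A ∪ C₂)
  have hinsert : insert u (A ∪ C₂) = univ.filter (fun x : V => (rank x : ℕ) < K + 3) := by
    rw [hunion]
    ext z
    rw [Finset.mem_insert, Finset.mem_filter, Finset.mem_filter]
    constructor
    · rintro (rfl | ⟨_, hz⟩)
      · exact ⟨Finset.mem_univ z, by omega⟩
      · exact ⟨Finset.mem_univ z, by omega⟩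
    · rintro ⟨_, hz⟩
      by_cases hz' : (rank z : ℕ) < K + 2
      · exact Or.inr ⟨Finset.mem_univ z, hz'⟩
      · have : (rank z : ℕ) = K + 2 := by omega
        exact Or.inl (hrankinj z u (by rw [this, hu]))
  have hvAC : v ∉ insert u (A ∪ C₂) := by
    rw [hinsert, Finset.mem_filter]
    rintro ⟨_, hc⟩
    omega
  have hnbrv : G.neighborFinset v ∩ insert u (A ∪ C₂)
      = (G.neighborFinset v).filter (fun z => (rank z : ℕ) < (rank v : ℕ)) := by
    rw [hinsert]
    ext z
    simp only [Finset.mem_inter, Finset.mem_filter, Finset.mem_univ, true_and, hv]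
  have Hv := H v hvAC
  rw [hnbrv] at Hv
  have hvge : K ≤ numAdjPred G rank v := h.2 v (by omega)
  have : numAdjPred G rank v ≤ K := by
    by_contra hc
    exact Hv (by unfold numAdjPred at hc; omega)
  omega
end
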